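/- arXiv:2009.02580 — 2 statements merged into one kernel-verified Lean document; each statement's English description precedes it below -/
import Mathlib

section
/- Let G and H be locally compact, second countable Hausdorff topological groups, let μ be a left Haar measure on G and ν a left Haar measure on H, and let θ : G → H be a continuous group homomorphism such that the pushforward measure θ_*(μ) is absolutely continuous with respect to ν. Then the image θ(G) (equivalently, the range of θ) is an open subset of H. -/
/-!
The image under `θ` of a compact neighbourhood of `1` in `G` is compact, and it is not
`ν`-null because its preimage has positive `μ`-measure and `μ.map θ ≪ ν`. By Steinhaus'
theorem its quotient set is a neighbourhood of `1` in `H`; it lies in the subgroup `θ(G)`,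
and a subgroup that is a neighbourhood of `1` is open.
-/

open MeasureTheory Pointwise

theorem MeasureTheory.Measure.pos_image_of_map_absolutelyContinuous
    {α β : Type*} [MeasurableSpace α] [MeasurableSpace β] {μ : Measure α} {ν : Measure β}
    {f : α → β} (hf : Measurable f) (habs : μ.map f ≪ ν) {s : Set α}
    (hs : MeasurableSet (f '' s)) (hpos : 0 < μ s) : 0 < ν (f '' s) := by
  refine pos_iff_ne_zero.2 fun hnull => hpos.ne' ?_
  have hmap : μ.map f (f '' s) = 0 := habs hnull
  rw [Measure.map_apply hf hs] at hmap
  exact measure_mono_null (Set.subset_preimage_image f s) hmap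

theorem Subgroup.isOpen_of_haar_pos_subset
    {H : Type*} [Group H] [TopologicalSpace H] [IsTopologicalGroup H] [LocallyCompactSpace H]
    [MeasurableSpace H] [BorelSpace H] (ν : Measure H) [ν.IsHaarMeasure] [ν.InnerRegular]
    (S : Subgroup H) {E : Set H} (hE : MeasurableSet E) (hpos : 0 < ν E)
    (hES : E ⊆ S) : IsOpen (S : Set H) := by
  refine S.isOpen_of_mem_nhds (Filter.mem_of_superset
    (Measure.div_mem_nhds_one_of_haar_pos ν E hE hpos) ?_)
  rintro _ ⟨a, ha, b, hb, rfl⟩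
  exact S.div_mem (hES ha) (hES hb)

theorem stmt0_general
    {G H : Type*}
    [Group G] [TopologicalSpace G] [LocallyCompactSpace G]
    [MeasurableSpace G] [BorelSpace G]
    [Group H] [TopologicalSpace H] [IsTopologicalGroup H] [LocallyCompactSpace H]
    [SecondCountableTopology H] [T2Space H] [MeasurableSpace H] [BorelSpace H]
    (μ : Measure G) [μ.IsHaarMeasure] (ν : Measure H) [ν.IsHaarMeasure]
    (θ : G →* H) (hθ : Continuous θ)
    (habs : μ.map θ ≪ ν) :
    IsOpen (Set.range (θ : G → H)) := by
  obtain ⟨K, hK, hK_nhds⟩ := exists_compact_mem_nhds (1 : G)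
  have hθK : MeasurableSet (θ '' K) := (hK.image hθ).measurableSet
  have hpos : 0 < ν (θ '' K) :=
    Measure.pos_image_of_map_absolutelyContinuous hθ.measurable habs hθK
      (μ.measure_pos_of_mem_nhds hK_nhds)
  rw [← MonoidHom.coe_range]
  exact θ.range.isOpen_of_haar_pos_subset ν hθK hpos (Set.image_subset_range θ K)

/-- If `θ : G → H` is a continuous homomorphism of locally compact second countable
Hausdorff groups and the pushforward of a left Haar measure `μ` on `G` is absolutely
continuous with respect to a left Haar measure `ν` on `H`, then the range of `θ`
is open in `H`. -/
theorem stmt0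
    {G H : Type*}
    [Group G] [TopologicalSpace G] [IsTopologicalGroup G] [LocallyCompactSpace G]
    [SecondCountableTopology G] [T2Space G] [MeasurableSpace G] [BorelSpace G]
    [Group H] [TopologicalSpace H] [IsTopologicalGroup H] [LocallyCompactSpace H]
    [SecondCountableTopology H] [T2Space H] [MeasurableSpace H] [BorelSpace H]
    (μ : Measure G) [μ.IsHaarMeasure] (ν : Measure H) [ν.IsHaarMeasure]
    (θ : G →* H) (hθ : Continuous θ)
    (habs : μ.map θ ≪ ν) :
    IsOpen (Set.range (θ : G → H)) :=
  stmt0_general μ ν θ hθ habs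
end

section
/- Let G and H be locally compact, second countable Hausdorff topological groups, let μ be a left Haar measure on G and ν a left Haar measure on H, and let θ : G → H be a continuous group homomorphism such that the pushforward measure θ_*(μ) is absolutely continuous with respect to ν. Then the subgroup H₀ = θ(G) of H, equipped with the subspace topology, is an open subgroup, and the restriction of ν to H₀ (the measure on H₀ obtained by pulling back ν along the inclusion H₀ ↪ H) is a left Haar measure on the topological group H₀. -/
/-!
Since `G` is σ-compact, some compact `K ⊆ G` has positive Haar measure, and absolute
continuity of `θ_*μ` forces `ν (θ '' K) > 0`. By Steinhaus' theorem `θ '' K / θ '' K` is then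
a neighbourhood of `1` inside `θ(G)`, so this subgroup is open, and Haar measures and
regularity restrict to open subgroups.
-/

open MeasureTheory Topology

theorem exists_isCompact_measure_image_pos {X Y : Type*} [TopologicalSpace X] [SigmaCompactSpace X]
    [MeasurableSpace X] [OpensMeasurableSpace X] [TopologicalSpace Y] [T2Space Y]
    [MeasurableSpace Y] [BorelSpace Y] {μ : Measure X} [NeZero μ] {ν : Measure Y} {f : X → Y}
    (hf : Continuous f) (habs : μ.map f ≪ ν) : ∃ K, IsCompact K ∧ 0 < ν (f '' K) := by
  obtain ⟨n, hn⟩ : ∃ n, μ (compactCovering X n) ≠ 0 := by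
    by_contra! h
    apply NeZero.ne μ
    rw [← Measure.measure_univ_eq_zero, ← iUnion_compactCovering, measure_iUnion_null_iff]
    exact h
  have hK := isCompact_compactCovering X n
  refine ⟨_, hK, pos_iff_ne_zero.2 fun h ↦ hn ?_⟩
  have hmap := habs h
  rw [Measure.map_apply hf.measurable (hK.image hf).measurableSet] at hmap
  exact measure_mono_null (Set.subset_preimage_image f _) hmap

theorem Subgroup.isOpen_of_haar_pos_of_subset {G : Type*} [Group G] [TopologicalSpace G]
    [IsTopologicalGroup G] [LocallyCompactSpace G] [MeasurableSpace G] [BorelSpace G]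
    (μ : Measure G) [μ.IsHaarMeasure] [μ.InnerRegularCompactLTTop] (S : Subgroup G) {E : Set G}
    (hE : MeasurableSet E) (hEpos : 0 < μ E) (hEfin : μ E ≠ ⊤) (hES : E ⊆ S) :
    IsOpen (S : Set G) := by
  refine S.isOpen_of_mem_nhds <|
    Filter.mem_of_superset (Measure.div_mem_nhds_one_of_haar_pos_ne_top μ E hE hEpos hEfin) ?_
  rintro _ ⟨a, ha, b, hb, rfl⟩
  exact div_mem (hES ha) (hES hb)

theorem stmt2_general
    {G H : Type*}
    [Group G] [TopologicalSpace G] [LocallyCompactSpace G]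
    [SecondCountableTopology G] [MeasurableSpace G] [BorelSpace G]
    [Group H] [TopologicalSpace H] [IsTopologicalGroup H] [LocallyCompactSpace H]
    [T2Space H] [MeasurableSpace H] [BorelSpace H]
    (μ : Measure G) [μ.IsHaarMeasure] (ν : Measure H) [ν.IsHaarMeasure] [ν.Regular]
    (θ : G →* H) (hθ : Continuous θ)
    (habs : μ.map θ ≪ ν) :
    IsOpen ((θ.range : Subgroup H) : Set H) ∧
      (ν.comap ((↑) : θ.range → H)).IsHaarMeasure ∧
      (ν.comap ((↑) : θ.range → H)).Regular := by
  obtain ⟨K, hK, hpos⟩ := exists_isCompact_measure_image_pos hθ habs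
  have hopen : IsOpen (θ.range : Set H) :=
    θ.range.isOpen_of_haar_pos_of_subset ν (hK.image hθ).measurableSet hpos
      (hK.image hθ).measure_lt_top.ne (θ.coe_range ▸ Set.image_subset_range θ K)
  have hemb : IsOpenEmbedding θ.range.subtype := hopen.isOpenEmbedding_subtypeVal
  exact ⟨hopen, Measure.IsHaarMeasure.comap (mH := inferInstance) ν hemb,
    Measure.Regular.comap' ν hemb⟩

/-- Under the standing hypotheses, `H₀ = θ(G)` is an open subgroup of `H` and the
restriction of `ν` to `H₀` (pulled back along the inclusion) is a left Haar measure
(in particular regular) on the topological group `H₀`. -/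
theorem stmt2
    {G H : Type*}
    [Group G] [TopologicalSpace G] [IsTopologicalGroup G] [LocallyCompactSpace G]
    [SecondCountableTopology G] [T2Space G] [MeasurableSpace G] [BorelSpace G]
    [Group H] [TopologicalSpace H] [IsTopologicalGroup H] [LocallyCompactSpace H]
    [SecondCountableTopology H] [T2Space H] [MeasurableSpace H] [BorelSpace H]
    (μ : Measure G) [μ.IsHaarMeasure] (ν : Measure H) [ν.IsHaarMeasure] [ν.Regular]
    (θ : G →* H) (hθ : Continuous θ)
    (habs : μ.map θ ≪ ν) :
    IsOpen ((θ.range : Subgroup H) : Set H) ∧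
      (ν.comap ((↑) : θ.range → H)).IsHaarMeasure ∧
      (ν.comap ((↑) : θ.range → H)).Regular :=
  stmt2_general μ ν θ hθ habs
end
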